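/- arXiv:2210.04348 — 2 statements merged into one kernel-verified Lean document; each statement's English description precedes it below -/
import Mathlib

section
/- Let $K$ be a nonsingular monotone kernel function (hence real-valued), $n \in \mathbb{N}$, $\nu_1,\dots,\nu_n > 0$, and let $J$ be a lower semicontinuous $n$-field function. Then for each $j \in \{0,1,\dots,n\}$ the interval maximum function $m_j(\mathbf{y}) := \sup_{t \in [y_j,y_{j+1}]} F(\mathbf{y},t)$ is lower semicontinuous on $\overline{S}$. -/
open Set Filter

noncomputable section

/-- A kernel function: finite and concave on `(-1,0)` and `(0,1)`, with equal one-sided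
limits at `0`, extended to `[-1,1]` (values in `ℝ ∪ {-∞}`, i.e. never `⊤`) by limits. -/
def IsKernelFunction (K : ℝ → EReal) : Prop :=
  (∀ t ∈ Set.Icc (-1:ℝ) 1, K t ≠ ⊤) ∧
  (∀ t ∈ Set.Ioo (-1:ℝ) 0, K t ≠ ⊥) ∧
  (∀ t ∈ Set.Ioo (0:ℝ) 1, K t ≠ ⊥) ∧
  ConcaveOn ℝ (Set.Ioo (-1:ℝ) 0) (fun t => (K t).toReal) ∧
  ConcaveOn ℝ (Set.Ioo (0:ℝ) 1) (fun t => (K t).toReal) ∧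
  Filter.Tendsto K (nhdsWithin 0 (Set.Iio 0)) (nhds (K 0)) ∧
  Filter.Tendsto K (nhdsWithin 0 (Set.Ioi 0)) (nhds (K 0)) ∧
  Filter.Tendsto K (nhdsWithin (-1) (Set.Ioi (-1:ℝ))) (nhds (K (-1))) ∧
  Filter.Tendsto K (nhdsWithin 1 (Set.Iio (1:ℝ))) (nhds (K 1))

/-- Monotone kernel: non-increasing on `(-1,0)`, non-decreasing on `(0,1)`. -/
def IsMonotoneKernel (K : ℝ → EReal) : Prop :=
  IsKernelFunction K ∧ AntitoneOn K (Set.Ioo (-1:ℝ) 0) ∧ MonotoneOn K (Set.Ioo (0:ℝ) 1)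

/-- The closed simplex of node systems `0 ≤ y 0 ≤ ⋯ ≤ y (n-1) ≤ 1`. -/
def simplex (n : ℕ) : Set (Fin n → ℝ) :=
  {y | Monotone y ∧ ∀ i, y i ∈ Set.Icc (0:ℝ) 1}

/-- The `j`-th node of the node system `y`, with `node y 0 = 0` and `node y (n+1) = 1`. -/
def node {n : ℕ} (y : Fin n → ℝ) (j : ℕ) : ℝ :=
  if h : 1 ≤ j ∧ j ≤ n then y ⟨j - 1, by omega⟩ else if j = 0 then 0 else 1

/-- An `n`-field function: bounded above on `[0,1]`, with values in `ℝ ∪ {-∞}`, finite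
at more than `n` points of `[0,1]`, where `0` and `1` count with weight `1/2`. -/
def IsFieldFunction (n : ℕ) (J : ℝ → EReal) : Prop :=
  (∀ t ∈ Set.Icc (0:ℝ) 1, J t ≠ ⊤) ∧
  (∃ C : ℝ, ∀ t ∈ Set.Icc (0:ℝ) 1, J t ≤ (C : EReal)) ∧
  ∃ T : Finset ℝ, ↑T ⊆ Set.Icc (0:ℝ) 1 ∧ (∀ t ∈ T, J t ≠ ⊥) ∧
    (n : ℝ) < ∑ t ∈ T, (if t = 0 ∨ t = 1 then (1/2 : ℝ) else 1)

/-- The (weighted) sum of translates function `F(y,t) = J(t) + ∑ ν_j K(t - y_j)`. -/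
def Fsum {n : ℕ} (K : ℝ → EReal) (ν : Fin n → ℝ) (J : ℝ → EReal)
    (y : Fin n → ℝ) (t : ℝ) : EReal :=
  J t + ∑ j, (ν j : EReal) * K (t - y j)

/-- The `j`-th interval maximum `m_j(y) = sup_{t ∈ [y_j, y_{j+1}]} F(y,t)`. -/
def mj {n : ℕ} (K : ℝ → EReal) (ν : Fin n → ℝ) (J : ℝ → EReal)
    (y : Fin n → ℝ) (j : ℕ) : EReal :=
  sSup (Fsum K ν J y '' Set.Icc (node y j) (node y (j + 1)))

/-- The regularity set `Y`: node systems with all interval maxima `> -∞`. -/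
def regularitySet {n : ℕ} (K : ℝ → EReal) (ν : Fin n → ℝ) (J : ℝ → EReal) :
    Set (Fin n → ℝ) :=
  {y ∈ simplex n | ∀ j ≤ n, mj K ν J y j ≠ ⊥}

/-- Upper semicontinuous regularization of a function on `[0,1]`. -/
def uscReg (φ : ℝ → EReal) (t : ℝ) : EReal :=
  ⨅ (r : ℝ) (_ : 0 < r), sSup (φ '' (Set.Ioo (t - r) (t + r) ∩ Set.Icc 0 1))

/-- Upper semicontinuous regularization computed within a subset `A` of `[0,1]`. -/
def uscRegOn (A : Set ℝ) (φ : ℝ → EReal) (t : ℝ) : EReal :=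
  ⨅ (r : ℝ) (_ : 0 < r), sSup (φ '' (Set.Ioo (t - r) (t + r) ∩ A))

/-!
The clamp `t ↦ max y_j (min t y_{j+1})` is continuous in `y` and maps `ℝ` onto
`[y_j, y_{j+1}]`, so `m_j(y) = ⨆ t, F(y, clamp_y t)`. Each `y ↦ F(y, clamp_y t)` is lower
semicontinuous: `J` is, and the kernel sum is a continuous real-valued function, because a
nonsingular kernel is continuous on `[-1,1]` (concavity inside the two halves, the one-sided
limits at `-1`, `0`, `1`). A supremum of lower semicontinuous functions is lower semicontinuous.
-/

open Topology

theorem EReal.coe_finset_sum {ι : Type*} (s : Finset ι) (f : ι → ℝ) :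
    ((∑ i ∈ s, f i : ℝ) : EReal) = ∑ i ∈ s, (f i : EReal) :=
  map_sum (⟨⟨((↑) : ℝ → EReal), EReal.coe_zero⟩, EReal.coe_add⟩ : ℝ →+ EReal) f s

theorem LowerSemicontinuousOn.congr {α β : Type*} [TopologicalSpace α] [Preorder β]
    {f g : α → β} {s : Set α} (h : LowerSemicontinuousOn f s) (hfg : EqOn f g s) :
    LowerSemicontinuousOn g s := fun x hx =>
  LowerSemicontinuousWithinAt.congr_of_eventuallyEq (h x hx) hx
    (eventuallyEq_of_mem self_mem_nhdsWithin hfg)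

theorem sub_mem_Icc_neg_one_one {a b : ℝ} (ha : a ∈ Icc (0:ℝ) 1) (hb : b ∈ Icc (0:ℝ) 1) :
    a - b ∈ Icc (-1:ℝ) 1 :=
  ⟨by linarith [ha.1, hb.2], by linarith [ha.2, hb.1]⟩

theorem IsKernelFunction.continuousOn_toReal {K : ℝ → EReal} (hK : IsKernelFunction K)
    (hKfin : ∀ t ∈ Icc (-1:ℝ) 1, K t ≠ ⊥) :
    ContinuousOn (fun t => (K t).toReal) (Icc (-1:ℝ) 1) := by
  obtain ⟨hKtop, -, -, hconc₁, hconc₂, hleft₀, hright₀, hright₁, hleft₁⟩ := hK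
  have toReal_within {x : ℝ} (hx : x ∈ Icc (-1:ℝ) 1) {s : Set ℝ}
      (h : Tendsto K (𝓝[s] x) (𝓝 (K x))) : ContinuousWithinAt (fun t => (K t).toReal) s x :=
    (EReal.tendsto_toReal (hKtop x hx) (hKfin x hx)).comp h
  intro x hx
  rcases hx.1.eq_or_lt with rfl | hx₁
  · exact (continuousWithinAt_Ioi_iff_Ici.1 (toReal_within hx hright₁)).mono Icc_subset_Ici_self
  rcases hx.2.eq_or_lt with rfl | hx₂
  · exact (continuousWithinAt_Iio_iff_Iic.1 (toReal_within hx hleft₁)).mono Icc_subset_Iic_self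
  refine ContinuousAt.continuousWithinAt ?_
  rcases lt_trichotomy x 0 with hx₀ | rfl | hx₀
  · exact (hconc₁.continuousOn isOpen_Ioo).continuousAt (Ioo_mem_nhds hx₁ hx₀)
  · exact continuousAt_iff_continuous_left_right.2
      ⟨continuousWithinAt_Iio_iff_Iic.1 (toReal_within hx hleft₀),
        continuousWithinAt_Ioi_iff_Ici.1 (toReal_within hx hright₀)⟩
  · exact (hconc₂.continuousOn isOpen_Ioo).continuousAt (Ioo_mem_nhds hx₀ hx₂)

section Fsum

variable {n : ℕ} {K : ℝ → EReal} {ν : Fin n → ℝ} {J : ℝ → EReal}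

theorem Fsum_eq_add_coe_toReal (hK : IsKernelFunction K) (hKfin : ∀ t ∈ Icc (-1:ℝ) 1, K t ≠ ⊥)
    {y : Fin n → ℝ} {t : ℝ} (hyt : ∀ i, t - y i ∈ Icc (-1:ℝ) 1) :
    Fsum K ν J y t = J t + ↑(∑ i, ν i * (K (t - y i)).toReal) := by
  rw [Fsum, EReal.coe_finset_sum]
  congr 1
  refine Finset.sum_congr rfl fun i _ => ?_
  rw [EReal.coe_mul, EReal.coe_toReal (hK.1 _ (hyt i)) (hKfin _ (hyt i))]

theorem lowerSemicontinuousOn_Fsum_comp (hK : IsKernelFunction K)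
    (hKfin : ∀ t ∈ Icc (-1:ℝ) 1, K t ≠ ⊥) (hJlsc : LowerSemicontinuousOn J (Icc (0:ℝ) 1))
    {s : Set (Fin n → ℝ)} (hs : ∀ y ∈ s, ∀ i, y i ∈ Icc (0:ℝ) 1)
    {g : (Fin n → ℝ) → ℝ} (hg : ContinuousOn g s) (hgs : MapsTo g s (Icc 0 1)) :
    LowerSemicontinuousOn (fun y => Fsum K ν J y (g y)) s := by
  have hdiff : ∀ y ∈ s, ∀ i, g y - y i ∈ Icc (-1:ℝ) 1 := fun y hy i =>
    sub_mem_Icc_neg_one_one (hgs hy) (hs y hy i)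
  set G : (Fin n → ℝ) → ℝ := fun y => ∑ i, ν i * (K (g y - y i)).toReal
  have hG : ContinuousOn G s := continuousOn_finsetSum _ fun i _ =>
    continuousOn_const.mul <| (hK.continuousOn_toReal hKfin).comp
      (hg.sub (continuous_apply i).continuousOn) fun y hy => hdiff y hy i
  have hJg : LowerSemicontinuousOn (J ∘ g) s := hJlsc.comp hg hgs
  have hGcoe : LowerSemicontinuousOn (fun y => (G y : EReal)) s :=
    (continuous_coe_real_ereal.comp_continuousOn hG).lowerSemicontinuousOn
  refine (hJg.add' hGcoe fun y _ => EReal.continuousAt_add (Or.inr (EReal.coe_ne_bot _))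
    (Or.inr (EReal.coe_ne_top _))).congr fun y hy => ?_
  exact (Fsum_eq_add_coe_toReal hK hKfin (hdiff y hy)).symm

end Fsum

section Nodes

variable {n : ℕ} {y : Fin n → ℝ}

theorem node_mem_Icc (hy : y ∈ simplex n) (j : ℕ) : node y j ∈ Icc (0:ℝ) 1 := by
  unfold node
  split_ifs
  exacts [hy.2 _, ⟨le_rfl, zero_le_one⟩, ⟨zero_le_one, le_rfl⟩]

theorem node_le_node_succ (hy : y ∈ simplex n) {j : ℕ} (hj : j ≤ n) :
    node y j ≤ node y (j + 1) := by
  rcases Nat.eq_zero_or_pos j with rfl | hj₀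
  · simpa [node] using (node_mem_Icc hy 1).1
  rcases hj.lt_or_eq with hjn | rfl
  · rw [node, dif_pos ⟨hj₀, hj⟩, node, dif_pos ⟨by omega, hjn⟩]
    exact hy.1 (Fin.mk_le_mk.2 (by omega))
  · simpa [node] using (node_mem_Icc hy j).2

theorem continuous_node (j : ℕ) : Continuous fun y : Fin n → ℝ => node y j := by
  unfold node
  split_ifs
  exacts [continuous_apply _, continuous_const, continuous_const]

def nodeClamp (y : Fin n → ℝ) (j : ℕ) (t : ℝ) : ℝ :=
  max (node y j) (min t (node y (j + 1)))

theorem continuous_nodeClamp (j : ℕ) (t : ℝ) : Continuous fun y : Fin n → ℝ => nodeClamp y j t :=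
  (continuous_node j).max (continuous_const.min (continuous_node (j + 1)))

theorem nodeClamp_mem_Icc (hy : y ∈ simplex n) {j : ℕ} (hj : j ≤ n) (t : ℝ) :
    nodeClamp y j t ∈ Icc (node y j) (node y (j + 1)) :=
  ⟨le_max_left _ _, max_le (node_le_node_succ hy hj) (min_le_right _ _)⟩

theorem nodeClamp_mem_Icc_zero_one (hy : y ∈ simplex n) {j : ℕ} (hj : j ≤ n) (t : ℝ) :
    nodeClamp y j t ∈ Icc (0:ℝ) 1 :=
  Icc_subset_Icc (node_mem_Icc hy j).1 (node_mem_Icc hy (j + 1)).2 (nodeClamp_mem_Icc hy hj t)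

theorem nodeClamp_eq_self {j : ℕ} {t : ℝ} (ht : t ∈ Icc (node y j) (node y (j + 1))) :
    nodeClamp y j t = t := by
  rw [nodeClamp, min_eq_left ht.2, max_eq_right ht.1]

theorem mj_eq_iSup_nodeClamp {K : ℝ → EReal} {ν : Fin n → ℝ} {J : ℝ → EReal}
    (hy : y ∈ simplex n) {j : ℕ} (hj : j ≤ n) :
    mj K ν J y j = ⨆ t : ℝ, Fsum K ν J y (nodeClamp y j t) := by
  rw [mj, sSup_image]
  refine le_antisymm (iSup₂_le fun t ht => ?_) (iSup_le fun t => ?_)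
  · exact nodeClamp_eq_self ht ▸ le_iSup (fun t => Fsum K ν J y (nodeClamp y j t)) t
  · exact le_iSup₂ (f := fun t _ => Fsum K ν J y t) _ (nodeClamp_mem_Icc hy hj t)

end Nodes

theorem mj_lowerSemicontinuousOn_general (n : ℕ)
    (K : ℝ → EReal) (hK : IsMonotoneKernel K)
    (hKfin : ∀ t ∈ Set.Icc (-1:ℝ) 1, K t ≠ ⊥)
    (ν : Fin n → ℝ)
    (J : ℝ → EReal)
    (hJlsc : LowerSemicontinuousOn J (Set.Icc (0:ℝ) 1)) :
    ∀ j ≤ n, LowerSemicontinuousOn (fun y => mj K ν J y j) (simplex n) := by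
  intro j hj
  have hclamp (t : ℝ) : LowerSemicontinuousOn
      (fun y => Fsum K ν J y (nodeClamp y j t)) (simplex n) :=
    lowerSemicontinuousOn_Fsum_comp hK.1 hKfin hJlsc (fun _ hy => hy.2)
      (continuous_nodeClamp j t).continuousOn fun _ hy => nodeClamp_mem_Icc_zero_one hy hj t
  exact (lowerSemicontinuousOn_iSup hclamp).congr fun y hy => (mj_eq_iSup_nodeClamp hy hj).symm

/-- Lower semicontinuity of the interval maxima `m_j` for a nonsingular (real-valued)
monotone kernel and a lower semicontinuous field. -/
theorem mj_lowerSemicontinuousOn (n : ℕ) (hn : 0 < n)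
    (K : ℝ → EReal) (hK : IsMonotoneKernel K)
    (hKfin : ∀ t ∈ Set.Icc (-1:ℝ) 1, K t ≠ ⊥)
    (ν : Fin n → ℝ) (hν : ∀ i, 0 < ν i)
    (J : ℝ → EReal) (hJ : IsFieldFunction n J)
    (hJlsc : LowerSemicontinuousOn J (Set.Icc (0:ℝ) 1)) :
    ∀ j ≤ n, LowerSemicontinuousOn (fun y => mj K ν J y j) (simplex n) :=
  mj_lowerSemicontinuousOn_general n K hK hKfin ν J hJlsc
end
end

section
/- Let $n \in \mathbb{N}$, $\nu_1,\dots,\nu_n > 0$, $K$ a kernel function, and $J$ an $n$-field function. Suppose there exists an equioscillation point $\mathbf{e} \in \overline{S}$, i.e., $m_0(\mathbf{e}) = m_1(\mathbf{e}) = \cdots = m_n(\mathbf{e}) =: \mu$, and suppose that strict majorization does not hold on the regularity set $Y$ (there are no $\mathbf{x}, \mathbf{y} \in Y$ with $m_j(\mathbf{x}) > m_j(\mathbf{y})$ for every $j$). Then $m(\overline{S}) := \sup_{\mathbf{y}\in\overline{S}} \min_{0\le j \le n} m_j(\mathbf{y}) = \mu$. -/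
open Set Filter

noncomputable section

/-! A point `t` of `[0,1]` at which `J` is finite makes `F(y,t)` finite unless `t - y_i` hits
a singularity `0, ±1` of `K`. Each node forbids total endpoint weight at most `1`, so the
weighted count of finite points of `J` (more than `n`) leaves such a `t`, and `t` lies in
some interval `[y_j, y_{j+1}]`. Hence `μ = m_j(e) > -∞` and `e ∈ Y`; a node system whose
smallest interval maximum exceeded `μ` would then lie in `Y` and strictly majorize `e`. -/

theorem Finset.sum_biUnion_le_sum_sum {ι α β : Type*} [DecidableEq α] [AddCommMonoid β]
    [PartialOrder β] [IsOrderedAddMonoid β] {w : α → β} (hw : ∀ a, 0 ≤ w a) (s : Finset ι)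
    (f : ι → Finset α) : ∑ a ∈ s.biUnion f, w a ≤ ∑ i ∈ s, ∑ a ∈ f i, w a := by
  rw [← Finset.sup_eq_biUnion]
  refine Finset.apply_sup_le_sum (f := fun u => ∑ a ∈ u, w a) Finset.sum_empty (fun {u v} => ?_) s
  rw [← Finset.sum_union_inter]
  exact le_add_of_nonneg_right (Finset.sum_nonneg fun a _ => hw a)

/-- The weight with which `t` counts in `IsFieldFunction`. -/
def endpointWeight (t : ℝ) : ℝ :=
  if t = 0 ∨ t = 1 then 1 / 2 else 1

lemma endpointWeight_nonneg (t : ℝ) : 0 ≤ endpointWeight t := by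
  unfold endpointWeight; split_ifs <;> norm_num

/-- The points `t ∈ [0,1]` with `t - s ∈ {-1, 0, 1}`, for `s ∈ [0,1]`. -/
def collisionPoints (s : ℝ) : Finset ℝ :=
  if s = 0 ∨ s = 1 then {0, 1} else {s}

lemma sum_endpointWeight_collisionPoints (s : ℝ) :
    ∑ t ∈ collisionPoints s, endpointWeight t = 1 := by
  unfold collisionPoints
  split_ifs with hs
  · rw [Finset.sum_pair zero_ne_one]; norm_num [endpointWeight]
  · simp [endpointWeight, hs]

lemma mem_collisionPoints {s t : ℝ} (hs : s ∈ Icc (0 : ℝ) 1) (ht : t ∈ Icc (0 : ℝ) 1)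
    (hts : t - s ∉ Ioo (-1 : ℝ) 1 \ {0}) : t ∈ collisionPoints s := by
  simp only [Set.mem_sdiff, Set.mem_Ioo, Set.mem_singleton_iff, not_and, not_not] at hts
  have hcases : t = s ∨ (t = 1 ∧ s = 0) ∨ (t = 0 ∧ s = 1) := by
    by_cases h1 : -1 < t - s
    · by_cases h2 : t - s < 1
      · exact Or.inl (sub_eq_zero.1 (hts ⟨h1, h2⟩))
      · right; left; constructor <;> linarith [hs.1, ht.2]
    · right; right; constructor <;> linarith [hs.2, ht.1]
  unfold collisionPoints
  rcases hcases with rfl | ⟨rfl, rfl⟩ | ⟨rfl, rfl⟩ <;> split_ifs <;> simp_all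

lemma exists_mem_forall_sub_mem_Ioo_sdiff_zero {ι : Type*} [Fintype ι] (e : ι → ℝ)
    (he : ∀ i, e i ∈ Icc (0 : ℝ) 1) (T : Finset ℝ) (hT : ↑T ⊆ Icc (0 : ℝ) 1)
    (hcount : (Fintype.card ι : ℝ) < ∑ t ∈ T, endpointWeight t) :
    ∃ t ∈ T, ∀ i, t - e i ∈ Ioo (-1 : ℝ) 1 \ {0} := by
  classical
  by_contra! hcollide
  have hcover : T ⊆ Finset.univ.biUnion (fun i => collisionPoints (e i)) := by
    intro t ht
    obtain ⟨i, hi⟩ := hcollide t ht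
    exact Finset.mem_biUnion.2 ⟨i, Finset.mem_univ i, mem_collisionPoints (he i) (hT ht) hi⟩
  refine hcount.not_ge ?_
  calc ∑ t ∈ T, endpointWeight t
      ≤ ∑ t ∈ Finset.univ.biUnion (fun i => collisionPoints (e i)), endpointWeight t :=
        Finset.sum_le_sum_of_subset_of_nonneg hcover fun t _ _ => endpointWeight_nonneg t
    _ ≤ ∑ i, ∑ t ∈ collisionPoints (e i), endpointWeight t :=
        Finset.sum_biUnion_le_sum_sum endpointWeight_nonneg _ _
    _ = Fintype.card ι := by simp [sum_endpointWeight_collisionPoints]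

lemma IsKernelFunction.ne_bot {K : ℝ → EReal} (hK : IsKernelFunction K) {s : ℝ}
    (hs : s ∈ Ioo (-1 : ℝ) 1 \ {0}) : K s ≠ ⊥ := by
  obtain ⟨⟨hs1, hs2⟩, hs0⟩ := hs
  rcases lt_or_gt_of_ne (hs0 : s ≠ 0) with h | h
  · exact hK.2.1 s ⟨hs1, h⟩
  · exact hK.2.2.1 s ⟨h, hs2⟩

lemma fsum_ne_bot {n : ℕ} {K : ℝ → EReal} {ν : Fin n → ℝ} {J : ℝ → EReal} {y : Fin n → ℝ}
    {t : ℝ} (hJ : J t ≠ ⊥) (hK : ∀ i, K (t - y i) ≠ ⊥) (hK' : ∀ i, K (t - y i) ≠ ⊤) :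
    Fsum K ν J y t ≠ ⊥ := by
  refine EReal.add_ne_bot_iff.2 ⟨hJ, fun hsum => ?_⟩
  obtain ⟨i, -, hi⟩ := WithBot.sum_eq_bot_iff.1 hsum
  rw [← EReal.coe_toReal (hK' i) (hK i), ← EReal.coe_mul] at hi
  exact EReal.coe_ne_bot _ hi

lemma exists_mem_Icc_node {n : ℕ} (y : Fin n → ℝ) {t : ℝ} (ht : t ∈ Icc (0 : ℝ) 1) :
    ∃ j ≤ n, t ∈ Icc (node y j) (node y (j + 1)) := by
  classical
  let P : ℕ → Prop := fun j => node y j ≤ t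
  have hP0 : P 0 := by simpa [P, node] using ht.1
  have hle : Nat.findGreatest P n ≤ n := Nat.findGreatest_le n
  refine ⟨Nat.findGreatest P n, hle, Nat.findGreatest_spec (Nat.zero_le n) hP0, ?_⟩
  by_cases hlast : Nat.findGreatest P n = n
  · rw [hlast]; simpa [node] using ht.2
  · exact le_of_not_ge (Nat.findGreatest_is_greatest (P := P) (Nat.lt_succ_self _) (by omega))

lemma fsum_le_mj {n : ℕ} (K : ℝ → EReal) (ν : Fin n → ℝ) (J : ℝ → EReal) (y : Fin n → ℝ)
    {j : ℕ} {t : ℝ} (ht : t ∈ Icc (node y j) (node y (j + 1))) :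
    Fsum K ν J y t ≤ mj K ν J y j :=
  le_sSup ⟨t, ht, rfl⟩

lemma exists_mj_ne_bot {n : ℕ} {K : ℝ → EReal} (hK : IsKernelFunction K) (ν : Fin n → ℝ)
    {J : ℝ → EReal} (hJ : IsFieldFunction n J) {y : Fin n → ℝ} (hy : y ∈ simplex n) :
    ∃ j ≤ n, mj K ν J y j ≠ ⊥ := by
  obtain ⟨-, -, T, hT, hJT, hcount⟩ := hJ
  obtain ⟨t, htT, hsub⟩ :=
    exists_mem_forall_sub_mem_Ioo_sdiff_zero y hy.2 T hT (by simpa [endpointWeight] using hcount)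
  obtain ⟨j, hj, htj⟩ := exists_mem_Icc_node y (hT htT)
  refine ⟨j, hj, ne_bot_of_le_ne_bot ?_ (fsum_le_mj K ν J y htj)⟩
  exact fsum_ne_bot (hJT t htT) (fun i => hK.ne_bot (hsub i))
    fun i => hK.1 _ (Ioo_subset_Icc_self (hsub i).1)

theorem maximin_eq_equioscillation_value_general (n : ℕ)
    (K : ℝ → EReal) (hK : IsKernelFunction K)
    (ν : Fin n → ℝ)
    (J : ℝ → EReal) (hJ : IsFieldFunction n J)
    (e : Fin n → ℝ) (he : e ∈ simplex n) (μ : EReal)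
    (heq : ∀ j ≤ n, mj K ν J e j = μ)
    (hnomaj : ¬ ∃ x ∈ regularitySet K ν J, ∃ y ∈ regularitySet K ν J,
      ∀ j ≤ n, mj K ν J y j < mj K ν J x j) :
    sSup ((fun y => ⨅ j : Fin (n + 1), mj K ν J y (j : ℕ)) '' simplex n) = μ := by
  have hμ : μ ≠ ⊥ := by
    obtain ⟨j, hj, hne⟩ := exists_mj_ne_bot hK ν hJ he
    rwa [heq j hj] at hne
  have he_reg : e ∈ regularitySet K ν J := ⟨he, fun j hj => heq j hj ▸ hμ⟩
  apply le_antisymm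
  · refine sSup_le ?_
    rintro _ ⟨y, hy, rfl⟩
    by_contra! hlt
    have hy_gt : ∀ j ≤ n, μ < mj K ν J y j := fun j hj =>
      hlt.trans_le (iInf_le _ (⟨j, Nat.lt_succ_of_le hj⟩ : Fin (n + 1)))
    exact hnomaj ⟨y, ⟨hy, fun j hj => (hy_gt j hj).ne_bot⟩, e, he_reg,
      fun j hj => heq j hj ▸ hy_gt j hj⟩
  · refine le_sSup ⟨e, he, ?_⟩
    simp only [fun j : Fin (n + 1) => heq j (Nat.lt_succ_iff.1 j.isLt), iInf_const]

/-- If an equioscillation point with value `μ` exists and strict majorization fails on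
the regularity set, then the simplex maximin equals `μ`. -/
theorem maximin_eq_equioscillation_value (n : ℕ) (hn : 0 < n)
    (K : ℝ → EReal) (hK : IsKernelFunction K)
    (ν : Fin n → ℝ) (hν : ∀ i, 0 < ν i)
    (J : ℝ → EReal) (hJ : IsFieldFunction n J)
    (e : Fin n → ℝ) (he : e ∈ simplex n) (μ : EReal)
    (heq : ∀ j ≤ n, mj K ν J e j = μ)
    (hnomaj : ¬ ∃ x ∈ regularitySet K ν J, ∃ y ∈ regularitySet K ν J,
      ∀ j ≤ n, mj K ν J y j < mj K ν J x j) :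
    sSup ((fun y => ⨅ j : Fin (n + 1), mj K ν J y (j : ℕ)) '' simplex n) = μ :=
  maximin_eq_equioscillation_value_general n K hK ν J hJ e he μ heq hnomaj
end
end
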